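/- Let P be a monic-up-to-sign real polynomial of exact degree n with n simple real zeros, |P(y)| ≥ 1 for all critical points y, A := {x ∈ ℝ : −1 ≤ P(x) ≤ 1}, 0 ∉ A, and |P(0)| > 1. Then with L_n(A) := min{‖Q‖_A : deg Q ≤ n, Q(0)=1} = 1/|P(0)| and κ := (|P(0)| + sqrt(P(0)² − 1))^{−1/n}, one has exactly L_n(A) = 2κⁿ/(1+κ²ⁿ). -/

import Mathlib

open Polynomial

noncomputable def supNorm (S : Set ℝ) (P : ℝ[X]) : ℝ := sSup ((fun x => |P.eval x|) '' S)

noncomputable def minDev (S : Set ℝ) (n : ℕ) : ℝ :=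
  sInf {r : ℝ | ∃ Q : ℝ[X], Q.degree ≤ n ∧ Q.eval 0 = 1 ∧ r = supNorm S Q}

/-!
Around each of the `n` simple zeros `r` of `P`, the set `{|P| < 1}` contains a maximal open
interval `(a, b)` with `|P a| = |P b| = 1`. Since every critical value of `P` has modulus at
least `1`, Rolle's theorem shows that `P a ≠ P b` (so `P a = -P b`) and that these intervals
are pairwise disjoint. If `Q(0) = 1` and `|P(0) Q| < 1` on `A`, then `R = P - P(0) Q` has the
sign of `P` at all the endpoints, hence a zero in each of the `n` intervals, as well as the
zero `0 ∉ A`: as `deg R ≤ n` this forces `R = 0`, which is absurd. The bound `1 / |P(0)|` is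
attained by `P / P(0)`, and `2κⁿ / (1 + κ²ⁿ) = 1 / |P(0)|` because `κ⁻ⁿ + κⁿ = 2 |P(0)|`.
-/

open Set Filter
open scoped Finset

lemma exists_mem_Ioo_eq_zero_of_mul_neg {f : ℝ → ℝ} {a b : ℝ} (hab : a ≤ b)
    (hf : ContinuousOn f (Icc a b)) (h : f a * f b < 0) : ∃ z ∈ Ioo a b, f z = 0 := by
  rcases mul_neg_iff.1 h with ⟨ha, hb⟩ | ⟨ha, hb⟩
  · exact intermediate_value_Ioo' hab hf ⟨hb, ha⟩
  · exact intermediate_value_Ioo hab hf ⟨ha, hb⟩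

lemma Continuous.exists_first_eq_right {f : ℝ → ℝ} (hf : Continuous f) {r c : ℝ} (hr : f r < c)
    (h : ∃ t, c ≤ f t ∧ r ≤ t) : ∃ b, r < b ∧ f b = c ∧ ∀ t ∈ Ico r b, f t < c := by
  set S := {t | c ≤ f t ∧ r ≤ t}
  have hS : BddBelow S := ⟨r, fun t ht => ht.2⟩
  obtain ⟨hcb, hrb⟩ : sInf S ∈ S :=
    ((isClosed_le continuous_const hf).inter isClosed_Ici).csInf_mem h hS
  have hlt : ∀ t ∈ Ico r (sInf S), f t < c := fun t ht =>
    not_le.1 fun hct => ht.2.not_ge (csInf_le hS ⟨hct, ht.1⟩)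
  have hrb' : r < sInf S := hrb.lt_of_ne fun h => hr.not_ge (h ▸ hcb)
  refine ⟨sInf S, hrb', le_antisymm ?_ hcb, hlt⟩
  have : Icc r (sInf S) ⊆ {t | f t ≤ c} := by
    rw [← closure_Ico hrb'.ne]
    exact closure_minimal (fun t ht => (hlt t ht).le) (isClosed_le hf continuous_const)
  exact this ⟨hrb, le_rfl⟩

lemma Continuous.exists_last_eq_left {f : ℝ → ℝ} (hf : Continuous f) {r c : ℝ} (hr : f r < c)
    (h : ∃ t, c ≤ f t ∧ t ≤ r) : ∃ a, a < r ∧ f a = c ∧ ∀ t ∈ Ioc a r, f t < c := by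
  obtain ⟨t, hct, htr⟩ := h
  obtain ⟨b, hb, hfb, hlt⟩ := (hf.comp continuous_neg).exists_first_eq_right (r := -r)
    (by simpa using hr) ⟨-t, by simpa using hct, neg_le_neg htr⟩
  refine ⟨-b, by linarith, by simpa using hfb, fun s hs => ?_⟩
  simpa using hlt (-s) ⟨neg_le_neg hs.2, by linarith [hs.1]⟩

lemma mul_pos_of_abs_eq_one_of_abs_sub_lt_one {x y : ℝ} (hx : |x| = 1) (hxy : |x - y| < 1) :
    0 < x * y := by
  have hxx : x * x = 1 := by rw [← abs_mul_abs_self, hx, one_mul]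
  have h : |x * (x - y)| < 1 := by rwa [abs_mul, hx, one_mul]
  linarith [(abs_lt.1 h).2, show x * y = x * x - x * (x - y) by ring]

lemma mul_neg_of_abs_sub_lt_one {x y u v : ℝ} (hx : |x| = 1) (hu : |u| = 1) (hxu : x * u < 0)
    (hxy : |x - y| < 1) (huv : |u - v| < 1) : y * v < 0 := by
  have h : 0 < x * u * (y * v) := by
    rw [show x * u * (y * v) = x * y * (u * v) by ring]
    exact mul_pos (mul_pos_of_abs_eq_one_of_abs_sub_lt_one hx hxy)
      (mul_pos_of_abs_eq_one_of_abs_sub_lt_one hu huv)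
  exact neg_of_mul_pos_right h hxu.le

lemma eq_zero_of_sign_changes {R : ℝ[X]} {s : Finset ℝ} {a b : ℝ → ℝ}
    (hR : R.natDegree ≤ #s) (hab : ∀ r ∈ s, a r < b r)
    (hsign : ∀ r ∈ s, R.eval (a r) * R.eval (b r) < 0)
    (hdisj : ∀ r ∈ s, ∀ r' ∈ s, r < r' → b r ≤ a r')
    {z₀ : ℝ} (hz₀ : R.eval z₀ = 0) (hz₀s : ∀ r ∈ s, z₀ ∉ Ioo (a r) (b r)) : R = 0 := by
  choose! z hz hRz using fun r hr =>
    exists_mem_Ioo_eq_zero_of_mul_neg (hab r hr).le R.continuous.continuousOn (hsign r hr)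
  have hzlt : ∀ r ∈ s, ∀ r' ∈ s, r < r' → z r < z r' := fun r hr r' hr' h =>
    ((hz r hr).2.trans_le (hdisj r hr r' hr' h)).trans (hz r' hr').1
  have hinj : InjOn z s := fun r hr r' hr' h => by
    by_contra hne
    rcases lt_or_gt_of_ne hne with hlt | hlt
    · exact (hzlt r hr r' hr' hlt).ne h
    · exact (hzlt r' hr' r hr hlt).ne' h
  have hz₀z : z₀ ∉ s.image z := by
    simp only [Finset.mem_image, not_exists, not_and]
    rintro r hr rfl
    exact hz₀s r hr (hz r hr)
  refine eq_zero_of_natDegree_lt_card_of_eval_eq_zero' R (insert z₀ (s.image z)) ?_ ?_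
  · simp only [Finset.mem_insert, Finset.mem_image]
    rintro x (rfl | ⟨r, hr, rfl⟩)
    exacts [hz₀, hRz r hr]
  · rw [Finset.card_insert_of_notMem hz₀z, Finset.card_image_of_injOn hinj]
    omega

namespace Polynomial

variable {P : ℝ[X]}

lemma tendsto_abs_eval_cocompact (hP : 0 < P.degree) :
    Tendsto (fun t => |P.eval t|) (cocompact ℝ) atTop := by
  simpa only [Real.norm_eq_abs] using P.tendsto_norm_atTop hP tendsto_norm_cocompact_atTop

lemma isCompact_setOf_abs_eval_le (hP : 0 < P.degree) (M : ℝ) :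
    IsCompact {t | |P.eval t| ≤ M} := by
  obtain ⟨K, hK, hKc⟩ := mem_cocompact.1 ((tendsto_abs_eval_cocompact hP).eventually_gt_atTop M)
  refine hK.of_isClosed_subset (isClosed_le P.continuous.abs continuous_const) fun t ht => ?_
  by_contra htK
  exact (show M < |P.eval t| from hKc htK).not_ge ht

lemma exists_abs_eval_eq_one_around (hP : 0 < P.degree) {r : ℝ} (hr : |P.eval r| < 1) :
    ∃ a b, a < r ∧ r < b ∧ |P.eval a| = 1 ∧ |P.eval b| = 1 ∧ ∀ t ∈ Ioo a b, |P.eval t| < 1 := by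
  have hcont : Continuous fun t => |P.eval t| := P.continuous.abs
  have hlarge := (tendsto_abs_eval_cocompact hP).eventually_ge_atTop 1
  obtain ⟨a, har, hPa, hlta⟩ := hcont.exists_last_eq_left hr
    ((hlarge.filter_mono atBot_le_cocompact).and (eventually_le_atBot r)).exists
  obtain ⟨b, hrb, hPb, hltb⟩ := hcont.exists_first_eq_right hr
    ((hlarge.filter_mono atTop_le_cocompact).and (eventually_ge_atTop r)).exists
  refine ⟨a, b, har, hrb, hPa, hPb, fun t ht => ?_⟩
  rcases le_total t r with htr | hrt
  exacts [hlta t ⟨ht.1, htr⟩, hltb t ⟨hrt, ht.2⟩]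

lemma exists_one_le_abs_eval_of_eval_eq (hcrit : ∀ y, P.derivative.eval y = 0 → 1 ≤ |P.eval y|)
    {a b : ℝ} (hab : a < b) (h : P.eval a = P.eval b) : ∃ y ∈ Ioo a b, 1 ≤ |P.eval y| := by
  obtain ⟨y, hy, hy0⟩ := exists_deriv_eq_zero hab P.continuous.continuousOn h
  exact ⟨y, hy, hcrit y (by rwa [Polynomial.deriv] at hy0)⟩

lemma eval_mul_eval_neg (hcrit : ∀ y, P.derivative.eval y = 0 → 1 ≤ |P.eval y|)
    {a b : ℝ} (hab : a < b) (ha : |P.eval a| = 1) (hb : |P.eval b| = 1)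
    (hlt : ∀ t ∈ Ioo a b, |P.eval t| < 1) : P.eval a * P.eval b < 0 := by
  have hne : P.eval a ≠ P.eval b := fun h => by
    obtain ⟨y, hy, hy1⟩ := exists_one_le_abs_eval_of_eval_eq hcrit hab h
    exact (hlt y hy).not_ge hy1
  rcases abs_eq zero_le_one |>.1 ha with ha | ha <;>
    rcases abs_eq zero_le_one |>.1 hb with hb | hb <;>
    simp_all

lemma le_of_abs_eval_lt_one (hcrit : ∀ y, P.derivative.eval y = 0 → 1 ≤ |P.eval y|)
    {r r' a b a' b' : ℝ} (hr : P.eval r = 0) (hr' : P.eval r' = 0) (hrr' : r < r')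
    (har : a < r) (hr'b' : r' < b') (hlt : ∀ t ∈ Ioo a b, |P.eval t| < 1)
    (hlt' : ∀ t ∈ Ioo a' b', |P.eval t| < 1) : b ≤ a' := by
  obtain ⟨y, hy, hy1⟩ := exists_one_le_abs_eval_of_eval_eq hcrit hrr' (hr.trans hr'.symm)
  have hby : b ≤ y := not_lt.1 fun hyb => (hlt y ⟨har.trans hy.1, hyb⟩).not_ge hy1
  have hya' : y ≤ a' := not_lt.1 fun hay => (hlt' y ⟨hay, hy.2.trans hr'b'⟩).not_ge hy1
  exact hby.trans hya'

end Polynomial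

section

variable {P : ℝ[X]}

lemma abs_eval_lt_of_supNorm_lt {K : Set ℝ} (hK : IsCompact K) {Q : ℝ[X]} {M : ℝ}
    (hQ : supNorm K Q < M) {t : ℝ} (ht : t ∈ K) : |Q.eval t| < M :=
  (le_csSup (hK.bddAbove_image Q.continuous.abs.continuousOn) (mem_image_of_mem _ ht)).trans_lt hQ

lemma roots_toFinset_nonempty_of_natDegree_le (hP : 0 < P.degree)
    (hroots : P.natDegree ≤ #P.roots.toFinset) : P.roots.toFinset.Nonempty :=
  Finset.card_pos.1 (hroots.trans_lt' (natDegree_pos_iff_degree_pos.2 hP))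

theorem inv_abs_eval_zero_le_supNorm (hP : 0 < P.degree)
    (hroots : P.natDegree ≤ #P.roots.toFinset)
    (hcrit : ∀ y, P.derivative.eval y = 0 → 1 ≤ |P.eval y|) (h0 : 1 < |P.eval 0|)
    {Q : ℝ[X]} (hQ : Q.natDegree ≤ P.natDegree) (hQ0 : Q.eval 0 = 1) :
    |P.eval 0|⁻¹ ≤ supNorm {t | |P.eval t| ≤ 1} Q := by
  set K := {t | |P.eval t| ≤ 1}
  set c := P.eval 0
  set s := P.roots.toFinset
  by_contra! hQsmall
  have hc : 0 < |c| := one_pos.trans h0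
  have hcQ : ∀ t ∈ K, |c * Q.eval t| < 1 := fun t ht => by
    rw [abs_mul, ← mul_inv_cancel₀ hc.ne']
    exact mul_lt_mul_of_pos_left
      (abs_eval_lt_of_supNorm_lt (isCompact_setOf_abs_eval_le hP 1) hQsmall ht) hc
  have hs : ∀ r ∈ s, P.eval r = 0 := fun r hr =>
    (isRoot_of_mem_roots (Multiset.mem_toFinset.1 hr)).eq_zero
  choose! a b har hrb hPa hPb hlt using fun r (hr : r ∈ s) =>
    exists_abs_eval_eq_one_around hP (r := r) (by simp [hs r hr])
  set R := P - C c * Q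
  have hPR : ∀ t ∈ K, |P.eval t - R.eval t| < 1 := fun t ht => by simpa [R] using hcQ t ht
  have hsign : ∀ r ∈ s, R.eval (a r) * R.eval (b r) < 0 := fun r hr =>
    mul_neg_of_abs_sub_lt_one (hPa r hr) (hPb r hr)
      (eval_mul_eval_neg hcrit ((har r hr).trans (hrb r hr)) (hPa r hr) (hPb r hr) (hlt r hr))
      (hPR _ (hPa r hr).le) (hPR _ (hPb r hr).le)
  have hRdeg : R.natDegree ≤ #s :=
    ((natDegree_sub_le _ _).trans (max_le le_rfl ((natDegree_C_mul_le _ _).trans hQ))).trans hroots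
  have hdisj : ∀ r ∈ s, ∀ r' ∈ s, r < r' → b r ≤ a r' := fun r hr r' hr' hrr' =>
    le_of_abs_eval_lt_one hcrit (hs r hr) (hs r' hr') hrr' (har r hr) (hrb r' hr') (hlt r hr)
      (hlt r' hr')
  have hR : R = 0 := eq_zero_of_sign_changes hRdeg (fun r hr => (har r hr).trans (hrb r hr))
    hsign hdisj (z₀ := 0) (by simp [R, c, hQ0]) fun r hr h => h0.not_ge (hlt r hr 0 h).le
  obtain ⟨r, hr⟩ := roots_toFinset_nonempty_of_natDegree_le hP hroots
  simpa [hR] using hsign r hr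

lemma supNorm_C_mul_self {t₀ : ℝ} (ht₀ : |P.eval t₀| = 1) (c : ℝ) :
    supNorm {t | |P.eval t| ≤ 1} (C c * P) = |c| := by
  refine IsGreatest.csSup_eq ⟨⟨t₀, ht₀.le, by simp [abs_mul, ht₀]⟩, ?_⟩
  rintro _ ⟨t, ht, rfl⟩
  simpa [abs_mul] using mul_le_of_le_one_right (abs_nonneg c) ht

theorem minDev_setOf_abs_eval_le_one (hP : 0 < P.degree)
    (hroots : P.natDegree ≤ #P.roots.toFinset)
    (hcrit : ∀ y, P.derivative.eval y = 0 → 1 ≤ |P.eval y|) (h0 : 1 < |P.eval 0|) :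
    minDev {t | |P.eval t| ≤ 1} P.natDegree = |P.eval 0|⁻¹ := by
  refine IsLeast.csInf_eq ⟨⟨C (P.eval 0)⁻¹ * P, ?_, ?_, ?_⟩, ?_⟩
  · exact degree_le_of_natDegree_le (natDegree_C_mul_le _ _)
  · rw [eval_mul, eval_C, inv_mul_cancel₀ (abs_pos.1 (one_pos.trans h0))]
  · obtain ⟨r, hr⟩ := roots_toFinset_nonempty_of_natDegree_le hP hroots
    obtain ⟨a, -, -, -, hPa, -⟩ := exists_abs_eval_eq_one_around hP (r := r)
      (by simp [(isRoot_of_mem_roots (Multiset.mem_toFinset.1 hr)).eq_zero])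
    rw [supNorm_C_mul_self hPa, abs_inv]
  · rintro _ ⟨Q, hQ, hQ0, rfl⟩
    exact inv_abs_eval_zero_le_supNorm hP hroots hcrit h0 (natDegree_le_iff_degree_le.2 hQ) hQ0

end

lemma Real.inv_add_sqrt_sq_sub_one {x : ℝ} (hx : 1 ≤ x) :
    (x + √(x ^ 2 - 1))⁻¹ = x - √(x ^ 2 - 1) := by
  have hs : √(x ^ 2 - 1) ^ 2 = x ^ 2 - 1 := Real.sq_sqrt (by nlinarith)
  exact inv_eq_of_mul_eq_one_right (by linear_combination -hs)

lemma Real.rpow_neg_one_div_pow {y : ℝ} (hy : 0 ≤ y) {n : ℕ} (hn : n ≠ 0) :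
    (y ^ (-(1 / n : ℝ))) ^ n = y⁻¹ := by
  rw [Real.rpow_neg hy, inv_pow, one_div, Real.rpow_inv_natCast_pow hy hn]

lemma two_mul_pow_div_one_add_pow_two_mul {x : ℝ} (hx : 1 ≤ x) {n : ℕ} (hn : n ≠ 0) :
    2 * ((x + √(x ^ 2 - 1)) ^ (-(1 / n : ℝ))) ^ n
      / (1 + ((x + √(x ^ 2 - 1)) ^ (-(1 / n : ℝ))) ^ (2 * n)) = 1 / x := by
  have hs : √(x ^ 2 - 1) ^ 2 = x ^ 2 - 1 := Real.sq_sqrt (by nlinarith)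
  rw [mul_comm 2 n, pow_mul, Real.rpow_neg_one_div_pow (by positivity) hn,
    Real.inv_add_sqrt_sq_sub_one hx, div_eq_div_iff (by positivity) (by positivity)]
  linear_combination -hs

theorem equality_case_algebraic_general (n : ℕ) (hn : 1 ≤ n) (P : ℝ[X])
    (hdeg : P.natDegree = n)
    (hroots : P.roots.card = n ∧ P.roots.Nodup)
    (hcrit : ∀ y : ℝ, P.derivative.eval y = 0 → 1 ≤ |P.eval y|)
    (A : Set ℝ) (hA : A = {x : ℝ | P.eval x ∈ Set.Icc (-1 : ℝ) 1})
    (hP0 : 1 < |P.eval 0|) :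
    minDev A n = 1 / |P.eval 0| ∧
    minDev A n =
      2 * ((|P.eval 0| + Real.sqrt ((P.eval 0) ^ 2 - 1)) ^ (-(1 / n : ℝ))) ^ n
        / (1 + ((|P.eval 0| + Real.sqrt ((P.eval 0) ^ 2 - 1)) ^ (-(1 / n : ℝ))) ^ (2 * n)) := by
  have hA' : A = {t | |P.eval t| ≤ 1} := by simp only [hA, mem_Icc, abs_le]
  have hmin : minDev A n = 1 / |P.eval 0| := by
    rw [hA', ← hdeg, one_div]
    refine minDev_setOf_abs_eval_le_one (natDegree_pos_iff_degree_pos.1 (by omega)) ?_ hcrit hP0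
    rw [Multiset.toFinset_card_of_nodup hroots.2, hroots.1, hdeg]
  refine ⟨hmin, ?_⟩
  rw [hmin, ← sq_abs (P.eval 0), two_mul_pow_div_one_add_pow_two_mul hP0.le (by omega)]

theorem equality_case_algebraic (n : ℕ) (hn : 1 ≤ n) (P : ℝ[X])
    (hdeg : P.natDegree = n)
    (hlead : P.leadingCoeff = 1 ∨ P.leadingCoeff = -1)
    (hroots : P.roots.card = n ∧ P.roots.Nodup)
    (hcrit : ∀ y : ℝ, P.derivative.eval y = 0 → 1 ≤ |P.eval y|)
    (A : Set ℝ) (hA : A = {x : ℝ | P.eval x ∈ Set.Icc (-1 : ℝ) 1})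
    (h0 : (0 : ℝ) ∉ A) (hP0 : 1 < |P.eval 0|) :
    minDev A n = 1 / |P.eval 0| ∧
    minDev A n =
      2 * ((|P.eval 0| + Real.sqrt ((P.eval 0) ^ 2 - 1)) ^ (-(1 / n : ℝ))) ^ n
        / (1 + ((|P.eval 0| + Real.sqrt ((P.eval 0) ^ 2 - 1)) ^ (-(1 / n : ℝ))) ^ (2 * n)) :=
  equality_case_algebraic_general n hn P hdeg hroots hcrit A hA hP0
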